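/- Let G be a k-uniform hypergraph on n vertices without isolated vertices with maximum degree Δ and average 2-degrees m₁ ≥ … ≥ m_n. Then the signless Laplacian spectral radius satisfies μ(G) ≤ m₁^{1/k} m₂^{1−1/k} + Δ. -/

import Mathlib

/-!
Let `Q x = ρ x^{[k-1]}` with `x ≠ 0`, put `z_j = |x_j| / d_j`, let `p` maximise `z` and `q`
maximise it among the other vertices. Rewriting the adjacency part of the eigenvalue equation
as a sum over the edges through a vertex, the equations at `p` and `q` give
`|ρ - d_p| z_p^{k-1} ≤ m_p z_q^{k-1}` and `|ρ - d_q| z_q^{k-1} ≤ m_q z_p z_q^{k-2}`.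
Multiplying them, `A C^{k-1} ≤ m_p m_q^{k-1}` for `A = |ρ - d_p|`, `C = |ρ - d_q|`. As `p ≠ q`
and the `m_i` are sorted, either `A ≤ m_p ≤ m₂` or `m_q ≤ m₂`, and both give
`min A C ≤ m₁^{1/k} m₂^{1-1/k}`; finally `|ρ| ≤ min A C + Δ`.
-/

/-- The spectral radius of an order-`k` tensor of dimension `n`: the largest modulus of its
(complex) eigenvalues, where `ρ` is an eigenvalue if `T x = ρ x^{[k-1]}` for some `x ≠ 0`. -/
noncomputable def specRad (n k : ℕ) (T : Fin n → (Fin (k-1) → Fin n) → ℝ) : ℝ :=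
  sSup {r : ℝ | ∃ ρ : ℂ, ‖ρ‖ = r ∧ ∃ x : Fin n → ℂ, x ≠ 0 ∧
    ∀ i, (∑ f : Fin (k-1) → Fin n, (T i f : ℂ) * ∏ a, x (f a)) = ρ * x i ^ (k-1)}

/-- A hypergraph on vertex set `Fin n` is a finite set of edges; `hDeg` is the degree of
vertex `i`, the number of edges containing `i`. -/
def hDeg (n : ℕ) (E : Finset (Finset (Fin n))) (i : Fin n) : ℕ :=
  (E.filter (fun e => i ∈ e)).card

/-- The average 2-degree of vertex `i` in a `k`-uniform hypergraph:
`m_i = (Σ_{{i,i₂,…,i_k} ∈ E_i} d_{i₂} ⋯ d_{i_k}) / d_i^{k-1}`. -/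
noncomputable def avg2 (n k : ℕ) (E : Finset (Finset (Fin n))) (i : Fin n) : ℝ :=
  (∑ e ∈ E.filter (fun e => i ∈ e), ∏ j ∈ e.erase i, (hDeg n E j : ℝ)) /
    (hDeg n E i : ℝ) ^ (k-1)

/-- The adjacency tensor of a `k`-uniform hypergraph: entry `1/(k-1)!` at `(i₁,…,i_k)` when
`{i₁,…,i_k}` is an edge, and `0` otherwise. -/
noncomputable def adjT (n k : ℕ) (E : Finset (Finset (Fin n))) :
    Fin n → (Fin (k-1) → Fin n) → ℝ :=
  fun i f => if insert i (Finset.image f Finset.univ) ∈ E then 1 / (k-1).factorial else 0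

/-- The signless Laplacian tensor `Q(G) = D(G) + A(G)`. -/
noncomputable def qT (n k : ℕ) (E : Finset (Finset (Fin n))) :
    Fin n → (Fin (k-1) → Fin n) → ℝ :=
  fun i f => (if ∀ a, f a = i then (hDeg n E i : ℝ) else 0) + adjT n k E i f

/-- A hypergraph is connected if every pair of distinct vertices is joined by a sequence of
pairwise intersecting edges. -/
def HConn (n : ℕ) (E : Finset (Finset (Fin n))) : Prop :=
  ∀ u v : Fin n, u ≠ v → ∃ r : ℕ, ∃ es : Fin (r+1) → Finset (Fin n),
    (∀ s, es s ∈ E) ∧ u ∈ es 0 ∧ v ∈ es (Fin.last r) ∧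
    ∀ s : Fin r, (es s.castSucc ∩ es s.succ).Nonempty

open Finset

section Tuples

variable {α : Type*} [DecidableEq α]

lemma injective_of_card_image_univ {m : ℕ} {f : Fin m → α} (h : #(univ.image f) = m) :
    Function.Injective f := by
  rw [← Set.injOn_univ, ← coe_univ]
  exact card_image_iff.1 (by simpa using h)

lemma image_univ_eq_erase_of_insert_eq {k : ℕ} {f : Fin (k - 1) → α} {i : α} {e : Finset α}
    (he : #e = k) (h : insert i (univ.image f) = e) : univ.image f = e.erase i := by
  have hk : 0 < k := he ▸ card_pos.2 ⟨i, h ▸ mem_insert_self i _⟩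
  have hi : i ∉ univ.image f := fun hi => by
    have := (card_image_le (s := univ) (f := f)).trans_eq (card_fin (k - 1))
    rw [insert_eq_of_mem hi] at h
    rw [← h] at he
    omega
  rw [← h, erase_insert hi]

lemma card_filter_image_univ_eq [Fintype α] {m : ℕ} {s : Finset α} (hs : #s = m) :
    #{f : Fin m → α | univ.image f = s} = m.factorial := by
  have hset : ({f | univ.image f = s} : Finset (Fin m → α)) =
      univ.image fun (g : Fin m ↪ s) a => (g a : α) := by
    ext f
    simp only [mem_filter, mem_univ, true_and, mem_image]
    constructor
    · intro hf
      have hmem : ∀ a, f a ∈ s := fun a => hf ▸ mem_image_of_mem f (mem_univ a)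
      refine ⟨⟨fun a => ⟨f a, hmem a⟩, fun a b hab => ?_⟩, rfl⟩
      exact injective_of_card_image_univ (hf ▸ hs) (congrArg Subtype.val hab)
    · rintro ⟨g, rfl⟩
      refine eq_of_subset_of_card_le (fun x hx => ?_) ?_
      · obtain ⟨a, -, rfl⟩ := mem_image.1 hx
        exact (g a).2
      · rw [card_image_of_injective _ fun a b h => g.injective (Subtype.ext h), hs]
        simp
  have hinj : Function.Injective fun (g : Fin m ↪ s) a => (g a : α) :=
    fun g₁ g₂ h => DFunLike.ext _ _ fun a => Subtype.ext (congrFun h a)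
  rw [hset, card_image_of_injective _ hinj, card_univ, Fintype.card_embedding_eq,
    Fintype.card_coe, hs, Fintype.card_fin, Nat.descFactorial_self]

end Tuples

section Hypergraph

variable {n k : ℕ} {E : Finset (Finset (Fin n))}

lemma adjT_nonneg (i : Fin n) (f : Fin (k - 1) → Fin n) : 0 ≤ adjT n k E i f := by
  unfold adjT; split <;> positivity

lemma avg2_nonneg (i : Fin n) : 0 ≤ avg2 n k E i := by
  unfold avg2; positivity

lemma avg2_mul_pow {i : Fin n} (hi : 0 < hDeg n E i) :
    avg2 n k E i * (hDeg n E i : ℝ) ^ (k - 1) =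
      ∑ e ∈ E with i ∈ e, ∏ j ∈ e.erase i, (hDeg n E j : ℝ) :=
  div_mul_cancel₀ _ (by positivity)

/-- Each edge `e ∋ i` is hit by exactly `(k-1)!` tuples, those enumerating `e.erase i`, and
this count cancels the weight `1/(k-1)!` of the adjacency tensor. -/
lemma sum_adjT_mul_prod (hcard : ∀ e ∈ E, #e = k) (i : Fin n) (w : Fin n → ℝ) :
    ∑ f : Fin (k - 1) → Fin n, adjT n k E i f * ∏ a, w (f a) =
      ∑ e ∈ E with i ∈ e, ∏ j ∈ e.erase i, w j := by
  have hfiber : ∀ e ∈ E, i ∈ e → ∀ f : Fin (k - 1) → Fin n,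
      (insert i (univ.image f) ∈ E ∧ insert i (univ.image f) = e) ↔
        univ.image f = e.erase i := by
    intro e he hie f
    refine ⟨fun h => image_univ_eq_erase_of_insert_eq (hcard e he) h.2, fun h => ?_⟩
    rw [h, insert_erase hie]
    exact ⟨he, rfl⟩
  calc ∑ f : Fin (k - 1) → Fin n, adjT n k E i f * ∏ a, w (f a)
      = ∑ f with insert i (univ.image f) ∈ E, ((k - 1).factorial : ℝ)⁻¹ * ∏ a, w (f a) := by
        rw [sum_filter]
        refine sum_congr rfl fun f _ => ?_
        unfold adjT
        split_ifs <;> simp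
    _ = ∑ e ∈ E with i ∈ e, ∑ f with univ.image f = e.erase i,
          ((k - 1).factorial : ℝ)⁻¹ * ∏ a, w (f a) := by
        rw [← sum_fiberwise_of_maps_to (g := fun f => insert i (univ.image f))
          (t := E.filter (i ∈ ·)) fun f hf => by
            simp only [mem_filter] at hf ⊢
            exact ⟨hf.2, mem_insert_self i _⟩]
        refine sum_congr rfl fun e he => ?_
        rw [mem_filter] at he
        rw [filter_filter]
        exact sum_congr (filter_congr fun f _ => hfiber e he.1 he.2 f) fun _ _ => rfl
    _ = ∑ e ∈ E with i ∈ e, ∏ j ∈ e.erase i, w j := by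
        refine sum_congr rfl fun e he => ?_
        rw [mem_filter] at he
        have hcard' : #(e.erase i) = k - 1 := by rw [card_erase_of_mem he.2, hcard e he.1]
        rw [sum_congr rfl (g := fun _ => ((k - 1).factorial : ℝ)⁻¹ * ∏ j ∈ e.erase i, w j),
          sum_const, card_filter_image_univ_eq hcard', nsmul_eq_mul,
          mul_inv_cancel_left₀ (by positivity)]
        intro f hf
        rw [mem_filter] at hf
        rw [← hf.2, prod_image fun a _ b _ h =>
          injective_of_card_image_univ (hf.2 ▸ hcard') h]

end Hypergraph

lemma prod_le_mul_pow_card_sub_one {ι : Type*} [DecidableEq ι] {s : Finset ι} {z : ι → ℝ}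
    {p : ι} {a b : ℝ} (hs : s.Nonempty) (hz : ∀ j ∈ s, 0 ≤ z j) (hb : ∀ j ∈ s, j ≠ p → z j ≤ b)
    (hpa : z p ≤ a) (hba : b ≤ a) :
    ∏ j ∈ s, z j ≤ a * b ^ (#s - 1) := by
  have hprod : ∀ t ⊆ s, p ∉ t → ∏ j ∈ t, z j ≤ b ^ #t := fun t hts hpt =>
    (prod_le_prod (fun j hj => hz j (hts hj))
      fun j hj => hb j (hts hj) fun h => hpt (h ▸ hj)).trans_eq (prod_const b)
  by_cases hp : p ∈ s
  · rw [← mul_prod_erase s z hp, ← card_erase_of_mem hp]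
    exact mul_le_mul hpa (hprod _ (erase_subset p s) (notMem_erase p s))
      (prod_nonneg fun j hj => hz j (mem_of_mem_erase hj)) ((hz p hp).trans hpa)
  · have hb0 : 0 ≤ b := by
      obtain ⟨j, hj⟩ := hs
      exact (hz j hj).trans (hb j hj fun h => hp (h ▸ hj))
    calc ∏ j ∈ s, z j ≤ b ^ #s := hprod s subset_rfl hp
      _ = b * b ^ (#s - 1) := by rw [← pow_succ', Nat.sub_add_cancel hs.card_pos]
      _ ≤ a * b ^ (#s - 1) := by gcongr

lemma mul_pow_le_of_ratio_bounds {A C M M' a b : ℝ} {k : ℕ} (hk : 2 ≤ k) (hA : 0 ≤ A)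
    (hC : 0 ≤ C) (hM : 0 ≤ M) (hM' : 0 ≤ M') (ha : 0 < a) (hb : 0 ≤ b)
    (h₁ : A * a ^ (k - 1) ≤ M * b ^ (k - 1)) (h₂ : C * b ^ (k - 1) ≤ M' * (a * b ^ (k - 2))) :
    A * C ^ (k - 1) ≤ M * M' ^ (k - 1) := by
  obtain ⟨m, rfl⟩ := Nat.exists_eq_add_of_le' hk
  simp only [Nat.add_sub_cancel, show m + 2 - 1 = m + 1 by omega] at h₁ h₂ ⊢
  rcases hb.eq_or_lt with rfl | hb
  · have : A = 0 := le_antisymm (nonpos_of_mul_nonpos_left (by simpa using h₁)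
      (pow_pos ha _)) hA
    rw [this, zero_mul]
    positivity
  · have h₂' : C * b ≤ M' * a := by
      rw [← mul_le_mul_iff_of_pos_right (pow_pos hb m)]
      calc C * b * b ^ m = C * b ^ (m + 1) := by ring
        _ ≤ M' * (a * b ^ m) := h₂
        _ = M' * a * b ^ m := by ring
    refine le_of_mul_le_mul_right ?_ (mul_pos (pow_pos ha (m + 1)) (pow_pos hb (m + 1)))
    calc A * C ^ (m + 1) * (a ^ (m + 1) * b ^ (m + 1))
        = A * a ^ (m + 1) * (C * b) ^ (m + 1) := by ring
      _ ≤ M * b ^ (m + 1) * (M' * a) ^ (m + 1) := by gcongr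
      _ = M * M' ^ (m + 1) * (a ^ (m + 1) * b ^ (m + 1)) := by ring

lemma min_le_rpow_mul_rpow_of_mul_pow_le {A C M₁ M₂ : ℝ} {k : ℕ} (hk : k ≠ 0) (hA : 0 ≤ A)
    (hC : 0 ≤ C) (hM₁ : 0 ≤ M₁) (hM₂ : 0 ≤ M₂) (h : A * C ^ (k - 1) ≤ M₁ * M₂ ^ (k - 1)) :
    min A C ≤ M₁ ^ ((1 : ℝ) / k) * M₂ ^ (1 - (1 : ℝ) / k) := by
  have hmin : 0 ≤ min A C := le_min hA hC
  have hpow : min A C ^ k ≤ M₁ * M₂ ^ (k - 1) := by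
    calc min A C ^ k = min A C * min A C ^ (k - 1) := by
          rw [← pow_succ', Nat.sub_add_cancel (Nat.one_le_iff_ne_zero.2 hk)]
      _ ≤ A * C ^ (k - 1) := by gcongr; exacts [min_le_left A C, min_le_right A C]
      _ ≤ M₁ * M₂ ^ (k - 1) := h
  have hexp : ((k - 1 : ℕ) : ℝ) * ((1 : ℝ) / k) = 1 - 1 / k := by
    rw [Nat.cast_sub (Nat.one_le_iff_ne_zero.2 hk)]
    field_simp
    norm_num
  calc min A C = (min A C ^ k) ^ ((1 : ℝ) / k) := by
        rw [one_div, Real.pow_rpow_inv_natCast hmin hk]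
    _ ≤ (M₁ * M₂ ^ (k - 1)) ^ ((1 : ℝ) / k) := by gcongr
    _ = M₁ ^ ((1 : ℝ) / k) * M₂ ^ (1 - (1 : ℝ) / k) := by
        rw [Real.mul_rpow hM₁ (by positivity), ← Real.rpow_natCast, ← Real.rpow_mul hM₂, hexp]

lemma le_rpow_mul_rpow_one_sub_of_le {M₁ M₂ t : ℝ} (ht : 0 ≤ t) (hM₂ : 0 ≤ M₂)
    (h : M₂ ≤ M₁) : M₂ ≤ M₁ ^ t * M₂ ^ (1 - t) := by
  rcases hM₂.eq_or_lt with rfl | hM₂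
  · exact mul_nonneg (Real.rpow_nonneg h t) (Real.rpow_nonneg le_rfl _)
  · calc M₂ = M₂ ^ t * M₂ ^ (1 - t) := by rw [← Real.rpow_add hM₂, add_sub_cancel, Real.rpow_one]
      _ ≤ M₁ ^ t * M₂ ^ (1 - t) := by gcongr

lemma min_le_of_antitone {n k : ℕ} (hk : k ≠ 0) {m : Fin n → ℝ} (hm : Antitone m)
    (hm0 : ∀ i, 0 ≤ m i) {i₀ i₁ p q : Fin n} (h₀ : (i₀ : ℕ) = 0) (h₁ : (i₁ : ℕ) = 1)
    (hpq : p ≠ q) {A C : ℝ} (hA : 0 ≤ A) (hC : 0 ≤ C) (hAp : A ≤ m p)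
    (h : A * C ^ (k - 1) ≤ m p * m q ^ (k - 1)) :
    min A C ≤ m i₀ ^ ((1 : ℝ) / k) * m i₁ ^ (1 - (1 : ℝ) / k) := by
  have hm₁₀ : m i₁ ≤ m i₀ := hm (Fin.le_def.2 (by omega))
  by_cases hp : m p ≤ m i₁
  · exact (min_le_left A C).trans <| hAp.trans <| hp.trans <|
      le_rpow_mul_rpow_one_sub_of_le (by positivity) (hm0 i₁) hm₁₀
  · have hp0 : (p : ℕ) = 0 := by
      by_contra hp0
      exact hp (hm (Fin.le_def.2 (by omega)))
    have hq : m q ≤ m i₁ := hm (Fin.le_def.2 (by have := Fin.val_ne_of_ne hpq; omega))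
    refine min_le_rpow_mul_rpow_of_mul_pow_le hk hA hC (hm0 i₀) (hm0 i₁) (h.trans ?_)
    exact mul_le_mul (hm (Fin.le_def.2 (by omega))) (pow_le_pow_left₀ (hm0 q) hq _)
      (pow_nonneg (hm0 q) _) (hm0 i₀)

lemma sum_ite_forall_eq_mul_prod {R ι : Type*} [CommSemiring R] [Fintype ι] [DecidableEq ι]
    {m : ℕ} (i : ι) (c : R) (x : ι → R) :
    ∑ f : Fin m → ι, (if ∀ a, f a = i then c else 0) * ∏ a, x (f a) = c * x i ^ m := by
  rw [Fintype.sum_eq_single fun _ => i]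
  · simp
  · intro f hf
    rw [if_neg fun h => hf (funext h), zero_mul]

def IsTensorEigenpair (n k : ℕ) (T : Fin n → (Fin (k - 1) → Fin n) → ℝ) (ρ : ℂ)
    (x : Fin n → ℂ) : Prop :=
  ∀ i, (∑ f : Fin (k - 1) → Fin n, (T i f : ℂ) * ∏ a, x (f a)) = ρ * x i ^ (k - 1)

namespace IsTensorEigenpair

variable {n k : ℕ} {E : Finset (Finset (Fin n))} {ρ : ℂ} {x : Fin n → ℂ}

lemma sum_adjT_mul_prod (h : IsTensorEigenpair n k (qT n k E) ρ x) (i : Fin n) :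
    ∑ f : Fin (k - 1) → Fin n, (adjT n k E i f : ℂ) * ∏ a, x (f a) =
      (ρ - hDeg n E i) * x i ^ (k - 1) := by
  have hi := h i
  simp only [qT, Complex.ofReal_add, add_mul, sum_add_distrib, apply_ite Complex.ofReal,
    Complex.ofReal_zero, sum_ite_forall_eq_mul_prod, Complex.ofReal_natCast] at hi
  linear_combination hi

lemma norm_sub_deg_mul_pow_le (hcard : ∀ e ∈ E, #e = k)
    (h : IsTensorEigenpair n k (qT n k E) ρ x) (i : Fin n) :
    ‖ρ - hDeg n E i‖ * ‖x i‖ ^ (k - 1) ≤ ∑ e ∈ E with i ∈ e, ∏ j ∈ e.erase i, ‖x j‖ := by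
  rw [← _root_.sum_adjT_mul_prod hcard, ← norm_pow, ← norm_mul, ← h.sum_adjT_mul_prod i]
  refine (norm_sum_le _ _).trans_eq (sum_congr rfl fun f _ => ?_)
  rw [norm_mul, Complex.norm_real, Real.norm_of_nonneg (adjT_nonneg i f), norm_prod]

lemma norm_sub_deg_mul_ratio_pow_le (hcard : ∀ e ∈ E, #e = k)
    (hiso : ∀ i : Fin n, 0 < hDeg n E i) (h : IsTensorEigenpair n k (qT n k E) ρ x)
    {i : Fin n} {c : ℝ} (hc : ∀ e ∈ E, i ∈ e → ∏ j ∈ e.erase i, ‖x j‖ / hDeg n E j ≤ c) :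
    ‖ρ - hDeg n E i‖ * (‖x i‖ / hDeg n E i) ^ (k - 1) ≤ avg2 n k E i * c := by
  have hd : ∀ j, (hDeg n E j : ℝ) ≠ 0 := fun j => by have := hiso j; positivity
  have hdi : (0 : ℝ) < (hDeg n E i : ℝ) ^ (k - 1) := by have := hiso i; positivity
  rw [← mul_le_mul_iff_of_pos_right hdi, mul_assoc, ← mul_pow, div_mul_cancel₀ _ (hd i),
    mul_right_comm, avg2_mul_pow (hiso i), sum_mul]
  refine (h.norm_sub_deg_mul_pow_le hcard i).trans (sum_le_sum fun e he => ?_)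
  rw [mem_filter] at he
  calc ∏ j ∈ e.erase i, ‖x j‖
      = (∏ j ∈ e.erase i, (hDeg n E j : ℝ)) * ∏ j ∈ e.erase i, ‖x j‖ / hDeg n E j := by
        rw [← prod_mul_distrib]
        exact prod_congr rfl fun j _ => (mul_div_cancel₀ _ (hd j)).symm
    _ ≤ (∏ j ∈ e.erase i, (hDeg n E j : ℝ)) * c :=
        mul_le_mul_of_nonneg_left (hc e he.1 he.2) (by positivity)

lemma norm_le_of_antitone_avg2 (hk : 2 ≤ k) (hcard : ∀ e ∈ E, #e = k)
    (hiso : ∀ i : Fin n, 0 < hDeg n E i) (hsort : Antitone (avg2 n k E)) {Δ : ℕ}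
    (hΔ : ∀ i : Fin n, hDeg n E i ≤ Δ) {i₀ i₁ : Fin n} (h₀ : (i₀ : ℕ) = 0) (h₁ : (i₁ : ℕ) = 1)
    (hx : x ≠ 0) (h : IsTensorEigenpair n k (qT n k E) ρ x) :
    ‖ρ‖ ≤ avg2 n k E i₀ ^ ((1 : ℝ) / k) * avg2 n k E i₁ ^ (1 - (1 : ℝ) / k) + Δ := by
  set z : Fin n → ℝ := fun j => ‖x j‖ / hDeg n E j
  have hz0 : ∀ j, 0 ≤ z j := fun j => by positivity
  obtain ⟨p, -, hp⟩ := exists_max_image univ z ⟨i₀, mem_univ _⟩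
  have hne : (univ.erase p).Nonempty := card_pos.1 <| by
    rw [card_erase_of_mem (mem_univ p), card_univ, Fintype.card_fin]
    have := i₁.isLt
    omega
  obtain ⟨q, hq, hqmax⟩ := exists_max_image (univ.erase p) z hne
  have hzq : ∀ j, j ≠ p → z j ≤ z q := fun j hj => hqmax j (mem_erase.2 ⟨hj, mem_univ j⟩)
  have hzp : 0 < z p := by
    refine (hz0 p).lt_of_ne fun hzp => hx (funext fun j => ?_)
    have hd : (0 : ℝ) < hDeg n E j := by exact_mod_cast hiso j
    have : z j = 0 := le_antisymm (hzp ▸ hp j (mem_univ j)) (hz0 j)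
    simpa [z, hd.ne'] using this
  have hAp : ‖ρ - hDeg n E p‖ * z p ^ (k - 1) ≤ avg2 n k E p * z q ^ (k - 1) :=
    h.norm_sub_deg_mul_ratio_pow_le hcard hiso fun e he hpe =>
      (prod_le_prod (fun j _ => hz0 j) fun j hj => hzq j (ne_of_mem_erase hj)).trans_eq
        (by rw [prod_const, card_erase_of_mem hpe, hcard e he])
  have hCq : ‖ρ - hDeg n E q‖ * z q ^ (k - 1) ≤ avg2 n k E q * (z p * z q ^ (k - 2)) :=
    h.norm_sub_deg_mul_ratio_pow_le hcard hiso fun e he hqe => by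
      have hcard' : #(e.erase q) = k - 1 := by rw [card_erase_of_mem hqe, hcard e he]
      have hne' : (e.erase q).Nonempty := card_pos.1 (by omega)
      have := prod_le_mul_pow_card_sub_one hne' (fun j _ => hz0 j)
        (fun j _ hjp => hzq j hjp) le_rfl (hp q (mem_univ q))
      rwa [hcard', show k - 1 - 1 = k - 2 by omega] at this
  have hA : ‖ρ - hDeg n E p‖ ≤ avg2 n k E p := by
    refine le_of_mul_le_mul_right (hAp.trans ?_) (pow_pos hzp (k - 1))
    gcongr
    · exact avg2_nonneg p
    · exact hp q (mem_univ q)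
  have hmin := min_le_of_antitone (by omega) hsort avg2_nonneg h₀ h₁
    (ne_of_mem_erase hq).symm (norm_nonneg _) (norm_nonneg _) hA
    (mul_pow_le_of_ratio_bounds hk (norm_nonneg _) (norm_nonneg _) (avg2_nonneg p)
      (avg2_nonneg q) hzp (hz0 q) hAp hCq)
  have hρ : ∀ j, ‖ρ‖ - Δ ≤ ‖ρ - hDeg n E j‖ := fun j => by
    have := norm_le_norm_sub_add ρ (hDeg n E j)
    have : (hDeg n E j : ℝ) ≤ Δ := by exact_mod_cast hΔ j
    rw [Complex.norm_natCast] at *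
    linarith
  linarith [le_min (hρ p) (hρ q)]

end IsTensorEigenpair

/-- Let `G` be a `k`-uniform hypergraph on `n` vertices without isolated vertices with
maximum degree `Δ` and average 2-degrees `m₁ ≥ … ≥ m_n`. Then
`μ(G) ≤ m₁^{1/k} m₂^{1-1/k} + Δ`. -/
theorem stmt6 (n k : ℕ) (hk : 2 ≤ k) (hkn : k ≤ n)
    (E : Finset (Finset (Fin n))) (hcard : ∀ e ∈ E, e.card = k)
    (hiso : ∀ i : Fin n, 0 < hDeg n E i)
    (hsort : ∀ i j : Fin n, i ≤ j → avg2 n k E j ≤ avg2 n k E i)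
    (Δ : ℕ) (hΔmax : ∀ i : Fin n, hDeg n E i ≤ Δ) :
    specRad n k (qT n k E) ≤
      (avg2 n k E ⟨0, by omega⟩) ^ ((1 : ℝ)/k) * (avg2 n k E ⟨1, by omega⟩) ^ (1 - (1 : ℝ)/k)
        + Δ := by
  refine Real.sSup_le ?_ (add_nonneg (mul_nonneg (Real.rpow_nonneg (avg2_nonneg _) _)
    (Real.rpow_nonneg (avg2_nonneg _) _)) Δ.cast_nonneg)
  rintro _ ⟨ρ, rfl, x, hx, hρx⟩
  exact IsTensorEigenpair.norm_le_of_antitone_avg2 hk hcard hiso hsort hΔmax rfl rfl hx hρx
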